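/- Let 0 < s < 1 and t ≥ 0. Then the family of numbers L^s_n(t), n ∈ ℤ, is summable and Σ_{n∈ℤ} L^s_n(t) = 1. -/

import Mathlib

/-- The kernel `L^s_n(t)` of the semigroup generated by minus the discrete fractional
Laplacian on `ℤ` with mesh size `h = 1`. -/
noncomputable def Lker (s : ℝ) (n : ℤ) (t : ℝ) : ℝ :=
  (1 / (2 * Real.pi)) *
    ∫ θ in (-Real.pi)..Real.pi, Real.exp (-t * (4 * Real.sin (θ / 2) ^ 2) ^ s) * Real.cos (n * θ)

/-!
Call `f : ℝ → ℝ` a nonnegative cosine series if `f θ = ∑ₙ aₙ cos (nθ)` for all `θ`, with all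
`aₙ ≥ 0`. Its Fourier coefficients are then `(aₙ + a₋ₙ) / 2`, so they are nonnegative and
summable with sum `f 0`. These series include `c cos (kθ)` for `c ≥ 0` and are closed under
products and under sums and integrals of families, hence under `exp`.

Since `4 sin²(θ/2) = 2 - 2 cos θ`, the function `e^{-4u sin²(θ/2)} - e^{-4u}`, which equals
`e^{-4u} (e^{2u + 2u cos θ} - 1)`, is one for `u ≥ 0`. Integrating it against `u^{-1-s} du`
(subordination: `∫₀^∞ (1 - e^{-xu}) u^{-1-s} du = c_s x^s` with `c_s > 0` for `0 < s < 1`) shows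
that `4^s - (4 sin²(θ/2))^s` is one, hence so is
`e^{-t (4 sin²(θ/2))^s} = e^{-t 4^s} exp (t (4^s - (4 sin²(θ/2))^s))`. Its Fourier coefficients
are the `L^s_n(t)`, and its value at `θ = 0` is `1`.
-/

open Real Set MeasureTheory
open scoped Nat

noncomputable def cosCoeff (f : ℝ → ℝ) (n : ℤ) : ℝ :=
  (1 / (2 * π)) * ∫ θ in -π..π, f θ * cos (n * θ)

def IsNonnegCosSeries (f : ℝ → ℝ) : Prop :=
  ∃ a : ℤ → ℝ, (∀ n, 0 ≤ a n) ∧ ∀ θ, HasSum (fun n : ℤ => a n * cos (n * θ)) (f θ)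

theorem norm_mul_cos_le {c : ℝ} (hc : 0 ≤ c) (x : ℝ) : ‖c * cos x‖ ≤ c := by
  rw [norm_mul, Real.norm_of_nonneg hc]
  exact mul_le_of_le_one_right hc (abs_cos_le_one x)

theorem integral_cos_int_mul (k : ℤ) :
    ∫ θ in -π..π, cos (k * θ) = if k = 0 then 2 * π else 0 := by
  split_ifs with hk
  · simp [hk, two_mul]
  · have hk' : (k : ℝ) ≠ 0 := Int.cast_ne_zero.mpr hk
    simp [intervalIntegral.integral_comp_mul_left (fun x => cos x) hk', integral_cos,
      sin_int_mul_pi]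

theorem cos_int_mul_mul_cos_int_mul (m n : ℤ) (θ : ℝ) :
    cos (m * θ) * cos (n * θ) = cos ((m - n : ℤ) * θ) / 2 + cos ((m + n : ℤ) * θ) / 2 := by
  push_cast
  rw [sub_mul, add_mul, cos_sub, cos_add]
  ring

theorem integral_cos_mul_cos (m n : ℤ) :
    ∫ θ in -π..π, cos (m * θ) * cos (n * θ) =
      (if m = n then π else 0) + (if m = -n then π else 0) := by
  simp_rw [cos_int_mul_mul_cos_int_mul]
  rw [intervalIntegral.integral_add (Continuous.intervalIntegrable (by fun_prop) _ _)
    (Continuous.intervalIntegrable (by fun_prop) _ _), intervalIntegral.integral_div,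
    intervalIntegral.integral_div, integral_cos_int_mul, integral_cos_int_mul]
  simp only [sub_eq_zero, add_eq_zero_iff_eq_neg]
  split_ifs <;> ring

theorem cosCoeff_eq_of_hasSum {f : ℝ → ℝ} {a : ℤ → ℝ}
    (hf : ∀ θ, HasSum (fun m : ℤ => a m * cos (m * θ)) (f θ)) (n : ℤ) :
    cosCoeff f n = (a n + a (-n)) / 2 := by
  have ha : Summable fun m => |a m| := by simpa using (hf 0).summable.abs
  have hint : HasSum (fun m : ℤ => ∫ θ in -π..π, a m * cos (m * θ) * cos (n * θ))
      (∫ θ in -π..π, f θ * cos (n * θ)) := by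
    refine intervalIntegral.hasSum_integral_of_dominated_convergence (fun m _ => |a m|)
      (fun m => by fun_prop) (fun m => ae_of_all _ fun θ _ => ?_)
      (ae_of_all _ fun _ _ => ha) intervalIntegrable_const
      (ae_of_all _ fun θ _ => (hf θ).mul_right _)
    rw [norm_mul, norm_mul, Real.norm_eq_abs]
    calc |a m| * ‖cos (m * θ)‖ * ‖cos (n * θ)‖ ≤ |a m| * 1 * 1 := by
          gcongr <;> exact abs_cos_le_one _
      _ = |a m| := by ring
  have hval : HasSum (fun m : ℤ => ∫ θ in -π..π, a m * cos (m * θ) * cos (n * θ))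
      ((a n + a (-n)) * π) := by
    have h : ∀ m : ℤ, ∫ θ in -π..π, a m * cos (m * θ) * cos (n * θ) =
        (if m = n then a n * π else 0) + (if m = -n then a (-n) * π else 0) := by
      intro m
      simp_rw [mul_assoc]
      rw [intervalIntegral.integral_const_mul, integral_cos_mul_cos]
      split_ifs <;> simp_all [mul_add]
    simp_rw [h, add_mul]
    exact (hasSum_ite_eq n _).add (hasSum_ite_eq (-n) _)
  rw [cosCoeff, hint.unique hval]
  field_simp

theorem isNonnegCosSeries_const_mul_cos {c : ℝ} (hc : 0 ≤ c) (k : ℤ) :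
    IsNonnegCosSeries fun θ => c * cos (k * θ) := by
  refine ⟨fun n => if n = k then c else 0, fun n => ?_, fun θ => ?_⟩
  · dsimp only
    split_ifs <;> simp [hc]
  · convert hasSum_ite_eq k (c * cos (k * θ)) using 1
    ext n
    split_ifs with h <;> simp [h]

theorem isNonnegCosSeries_const {c : ℝ} (hc : 0 ≤ c) : IsNonnegCosSeries fun _ => c := by
  simpa using isNonnegCosSeries_const_mul_cos hc 0

namespace IsNonnegCosSeries

variable {f g : ℝ → ℝ}

theorem cosCoeff_nonneg (hf : IsNonnegCosSeries f) (n : ℤ) : 0 ≤ cosCoeff f n := by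
  obtain ⟨a, ha, hfa⟩ := hf
  rw [cosCoeff_eq_of_hasSum hfa]
  exact div_nonneg (add_nonneg (ha n) (ha (-n))) zero_le_two

theorem hasSum_cosCoeff_mul_cos (hf : IsNonnegCosSeries f) (θ : ℝ) :
    HasSum (fun n : ℤ => cosCoeff f n * cos (n * θ)) (f θ) := by
  obtain ⟨a, -, hfa⟩ := hf
  have hneg : HasSum (fun n : ℤ => a (-n) * cos (n * θ)) (f θ) := by
    simpa [Function.comp_def] using (Equiv.neg ℤ).hasSum_iff.mpr (hfa θ)
  simp_rw [cosCoeff_eq_of_hasSum hfa, div_mul_eq_mul_div, add_mul]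
  simpa using ((hfa θ).add hneg).div_const 2

theorem hasSum_cosCoeff (hf : IsNonnegCosSeries f) : HasSum (cosCoeff f) (f 0) := by
  simpa using hf.hasSum_cosCoeff_mul_cos 0

theorem add (hf : IsNonnegCosSeries f) (hg : IsNonnegCosSeries g) :
    IsNonnegCosSeries fun θ => f θ + g θ := by
  obtain ⟨a, ha, hfa⟩ := hf
  obtain ⟨b, hb, hgb⟩ := hg
  exact ⟨a + b, fun n => add_nonneg (ha n) (hb n),
    fun θ => by simpa [add_mul] using (hfa θ).add (hgb θ)⟩

theorem const_mul (hf : IsNonnegCosSeries f) {c : ℝ} (hc : 0 ≤ c) :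
    IsNonnegCosSeries fun θ => c * f θ := by
  obtain ⟨a, ha, hfa⟩ := hf
  exact ⟨fun n => c * a n, fun n => mul_nonneg hc (ha n),
    fun θ => by simpa [mul_assoc] using (hfa θ).mul_left c⟩

theorem of_hasSum {ι : Type*} {ψ : ι → ℝ → ℝ} {F : ℝ → ℝ} (hf : ∀ i, IsNonnegCosSeries (ψ i))
    (hF : ∀ θ, HasSum (fun i => ψ i θ) (F θ)) : IsNonnegCosSeries F := by
  choose a ha hfa using hf
  have hfa0 : ∀ i, HasSum (a i) (ψ i 0) := fun i => by simpa using hfa i 0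
  have hA : Summable fun p : ι × ℤ => a p.1 p.2 := by
    rw [summable_prod_of_nonneg fun p => ha p.1 p.2]
    exact ⟨fun i => (hfa0 i).summable, (hF 0).summable.congr fun i => (hfa0 i).tsum_eq.symm⟩
  refine ⟨fun n => ∑' i, a i n, fun n => tsum_nonneg fun i => ha i n, fun θ => ?_⟩
  have hB : Summable fun p : ι × ℤ => a p.1 p.2 * cos (p.2 * θ) :=
    hA.of_norm_bounded fun p => norm_mul_cos_le (ha _ _) _
  have hfibers_i : HasSum (fun i => ψ i θ) (∑' p : ι × ℤ, a p.1 p.2 * cos (p.2 * θ)) :=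
    hB.hasSum.prod_fiberwise fun i => hfa i θ
  have hA' : Summable fun q : ℤ × ι => a q.2 q.1 :=
    (Equiv.prodComm ι ℤ).summable_iff.mp hA
  have hfibers_n : HasSum (fun n : ℤ => (∑' i, a i n) * cos (n * θ))
      (∑' p : ι × ℤ, a p.1 p.2 * cos (p.2 * θ)) :=
    ((Equiv.prodComm ι ℤ).hasSum_iff (f := fun q : ℤ × ι => a q.2 q.1 * cos (q.1 * θ))).mp
      hB.hasSum |>.prod_fiberwise fun n => (hA'.prod_factor n).hasSum.mul_right _
  rwa [(hF θ).unique hfibers_i]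

theorem mul (hf : IsNonnegCosSeries f) (hg : IsNonnegCosSeries g) :
    IsNonnegCosSeries fun θ => f θ * g θ := by
  obtain ⟨a, ha, hfa⟩ := hf
  obtain ⟨b, hb, hgb⟩ := hg
  have hab : Summable fun p : ℤ × ℤ => a p.1 * b p.2 :=
    Summable.mul_of_nonneg (by simpa using (hfa 0).summable) (by simpa using (hgb 0).summable)
      ha hb
  refine of_hasSum (ψ := fun (p : ℤ × ℤ) θ => a p.1 * cos (p.1 * θ) * (b p.2 * cos (p.2 * θ)))
    (fun p => ?_) fun θ => (hfa θ).mul (hgb θ) (hab.of_norm_bounded fun (p : ℤ × ℤ) => ?_)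
  · have hc : 0 ≤ a p.1 * b p.2 / 2 := div_nonneg (mul_nonneg (ha _) (hb _)) zero_le_two
    convert (isNonnegCosSeries_const_mul_cos hc (p.1 - p.2)).add
      (isNonnegCosSeries_const_mul_cos hc (p.1 + p.2)) using 2 with θ
    rw [mul_mul_mul_comm, cos_int_mul_mul_cos_int_mul]
    ring
  · rw [norm_mul]
    exact mul_le_mul (norm_mul_cos_le (ha _) _) (norm_mul_cos_le (hb _) _) (norm_nonneg _) (ha _)

theorem pow (hf : IsNonnegCosSeries f) (k : ℕ) : IsNonnegCosSeries fun θ => f θ ^ k := by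
  induction k with
  | zero => simpa using isNonnegCosSeries_const zero_le_one
  | succ k ih => simpa [pow_succ] using ih.mul hf

theorem exp_sub_one (hf : IsNonnegCosSeries f) : IsNonnegCosSeries fun θ => exp (f θ) - 1 := by
  refine of_hasSum (fun k => (hf.pow (k + 1)).const_mul (c := ((k + 1)! : ℝ)⁻¹) (by positivity))
    fun θ => ?_
  have h := (hasSum_nat_add_iff' 1).mpr
    (Real.exp_eq_exp_ℝ ▸ NormedSpace.expSeries_div_hasSum_exp (f θ))
  simpa [div_eq_inv_mul] using h

theorem exp (hf : IsNonnegCosSeries f) : IsNonnegCosSeries fun θ => exp (f θ) := by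
  simpa using (isNonnegCosSeries_const zero_le_one).add hf.exp_sub_one

end IsNonnegCosSeries

theorem isNonnegCosSeries_integral {α : Type*} [MeasurableSpace α] {μ : Measure α}
    {F : α → ℝ → ℝ} (hF : ∀ᵐ x ∂μ, IsNonnegCosSeries (F x)) (hFm : Measurable (Function.uncurry F))
    (hF0 : Integrable (fun x => F x 0) μ) :
    IsNonnegCosSeries fun θ => ∫ x, F x θ ∂μ := by
  have hmeas : ∀ n : ℤ, StronglyMeasurable fun x => cosCoeff (F x) n := by
    intro n
    have h : StronglyMeasurable fun x => ∫ θ in Ioc (-π) π, F x θ * cos (n * θ) :=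
      StronglyMeasurable.integral_prod_right (f := fun x θ => F x θ * cos (n * θ))
        (hFm.mul (by fun_prop)).stronglyMeasurable
    simp only [cosCoeff, intervalIntegral.integral_of_le (neg_le_self pi_pos.le)]
    exact h.const_mul _
  refine ⟨fun n => ∫ x, cosCoeff (F x) n ∂μ,
    fun n => integral_nonneg_of_ae (hF.mono fun x hx => hx.cosCoeff_nonneg n), fun θ => ?_⟩
  have h := hasSum_integral_of_dominated_convergence
    (F := fun n x => cosCoeff (F x) n * cos (n * θ)) (fun n x => cosCoeff (F x) n)
    (fun n => ((hmeas n).mul_const _).aestronglyMeasurable)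
    (fun n => hF.mono fun x hx => norm_mul_cos_le (hx.cosCoeff_nonneg n) _)
    (hF.mono fun x hx => hx.hasSum_cosCoeff.summable)
    (hF0.congr (hF.mono fun x hx => hx.hasSum_cosCoeff.tsum_eq.symm))
    (hF.mono fun x hx => hx.hasSum_cosCoeff_mul_cos θ)
  simpa only [integral_mul_const] using h

theorem integrableOn_one_sub_exp_neg_mul_mul_rpow {s x : ℝ} (hs0 : 0 < s) (hs1 : s < 1)
    (hx : 0 ≤ x) : IntegrableOn (fun u => (1 - exp (-(x * u))) * u ^ (-1 - s)) (Ioi 0) := by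
  have hm : AEStronglyMeasurable (fun u : ℝ => (1 - exp (-(x * u))) * u ^ (-1 - s)) := by
    fun_prop
  have hnorm : ∀ u ∈ Ioi (0 : ℝ), ‖(1 - exp (-(x * u))) * u ^ (-1 - s)‖ ≤
      min (x * u) 1 * u ^ (-1 - s) := by
    intro u hu
    have hxu : 0 ≤ x * u := mul_nonneg hx (le_of_lt hu)
    have h1 : 1 - exp (-(x * u)) ≤ x * u := by linarith [add_one_le_exp (-(x * u))]
    have h2 : 0 ≤ 1 - exp (-(x * u)) := by simpa using exp_le_one_iff.mpr (neg_nonpos.mpr hxu)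
    rw [norm_mul, Real.norm_of_nonneg h2, Real.norm_of_nonneg (rpow_nonneg (le_of_lt hu) _)]
    exact mul_le_mul_of_nonneg_right (le_min h1 (by linarith [exp_pos (-(x * u))]))
      (rpow_nonneg (le_of_lt hu) _)
  rw [← Ioc_union_Ioi_eq_Ioi zero_le_one]
  refine IntegrableOn.union ?_ ?_
  · have hg : IntegrableOn (fun u : ℝ => x * u ^ (-s)) (Ioc 0 1) :=
      ((intervalIntegrable_iff_integrableOn_Ioc_of_le zero_le_one).mp
        (intervalIntegral.intervalIntegrable_rpow' (by linarith))).const_mul x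
    refine hg.mono' hm.restrict (ae_restrict_of_forall_mem measurableSet_Ioc fun u hu => ?_)
    calc _ ≤ min (x * u) 1 * u ^ (-1 - s) := hnorm u hu.1
      _ ≤ x * u * u ^ (-1 - s) :=
        mul_le_mul_of_nonneg_right (min_le_left _ _) (rpow_nonneg hu.1.le _)
      _ = x * u ^ (-s) := by rw [show -s = 1 + (-1 - s) by ring, rpow_add hu.1, rpow_one, mul_assoc]
  · refine (integrableOn_Ioi_rpow_of_lt (a := -1 - s) (by linarith) zero_lt_one).mono' hm.restrict
      (ae_restrict_of_forall_mem measurableSet_Ioi fun u hu => ?_)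
    have hu0 : (0 : ℝ) < u := zero_lt_one.trans hu
    exact (hnorm u hu0).trans (mul_le_of_le_one_left (rpow_nonneg hu0.le _) (min_le_right _ _))

theorem integral_one_sub_exp_neg_mul_mul_rpow {s x : ℝ} (hs0 : 0 < s) (hx : 0 ≤ x) :
    ∫ u in Ioi 0, (1 - exp (-(x * u))) * u ^ (-1 - s) =
      x ^ s * ∫ u in Ioi 0, (1 - exp (-u)) * u ^ (-1 - s) := by
  rcases hx.eq_or_lt with rfl | hx
  · simp [zero_rpow hs0.ne']
  have h : ∀ u ∈ Ioi (0 : ℝ), (1 - exp (-(x * u))) * u ^ (-1 - s) =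
      x ^ (1 + s) * ((1 - exp (-(x * u))) * (x * u) ^ (-1 - s)) := by
    intro u hu
    have hx1 : x ^ (1 + s) * x ^ (-1 - s) = 1 := by rw [← rpow_add hx]; simp
    rw [mul_rpow hx.le (le_of_lt hu)]
    linear_combination (-(1 - exp (-(x * u))) * u ^ (-1 - s)) * hx1
  rw [setIntegral_congr_fun measurableSet_Ioi h, integral_const_mul,
    integral_comp_mul_left_Ioi (fun v => (1 - exp (-v)) * v ^ (-1 - s)) 0 hx, mul_zero,
    smul_eq_mul, rpow_add hx, rpow_one]
  field_simp

theorem integral_one_sub_exp_neg_mul_rpow_pos {s : ℝ} (hs0 : 0 < s) (hs1 : s < 1) :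
    0 < ∫ u in Ioi 0, (1 - exp (-u)) * u ^ (-1 - s) := by
  have hpos : ∀ u ∈ Ioi (0 : ℝ), 0 < (1 - exp (-u)) * u ^ (-1 - s) := fun u hu =>
    mul_pos (sub_pos.mpr (exp_lt_one_iff.mpr (neg_lt_zero.mpr hu))) (rpow_pos_of_pos hu _)
  have hint := integrableOn_one_sub_exp_neg_mul_mul_rpow hs0 hs1 zero_le_one
  simp only [one_mul] at hint
  have hsupp : Function.support (fun u : ℝ => (1 - exp (-u)) * u ^ (-1 - s)) ∩ Ioi 0 = Ioi 0 :=
    inter_eq_right.mpr fun u hu => (hpos u hu).ne'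
  rw [setIntegral_pos_iff_support_of_nonneg_ae
    (ae_restrict_of_forall_mem measurableSet_Ioi fun u hu => (hpos u hu).le) hint, hsupp,
    volume_Ioi]
  exact ENNReal.zero_lt_top

theorem isNonnegCosSeries_exp_neg_mul_sub_exp {u : ℝ} (hu : 0 ≤ u) :
    IsNonnegCosSeries fun θ => exp (-(4 * sin (θ / 2) ^ 2 * u)) - exp (-(4 * u)) := by
  have hg : IsNonnegCosSeries fun θ => 2 * u + 2 * u * cos θ := by
    simpa using (isNonnegCosSeries_const (by positivity : (0 : ℝ) ≤ 2 * u)).add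
      (isNonnegCosSeries_const_mul_cos (by positivity : (0 : ℝ) ≤ 2 * u) 1)
  convert hg.exp_sub_one.const_mul (exp_pos (-(4 * u))).le using 2 with θ
  rw [mul_sub, mul_one, ← exp_add, sin_sq_eq_half_sub, show 2 * (θ / 2) = θ by ring]
  ring_nf

theorem integral_rpow_mul_exp_sub_exp {s x y : ℝ} (hs0 : 0 < s) (hs1 : s < 1) (hx : 0 ≤ x)
    (hy : 0 ≤ y) :
    ∫ u in Ioi 0, u ^ (-1 - s) * (exp (-(x * u)) - exp (-(y * u))) =
      (y ^ s - x ^ s) * ∫ u in Ioi 0, (1 - exp (-u)) * u ^ (-1 - s) := by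
  have h : ∀ u : ℝ, u ^ (-1 - s) * (exp (-(x * u)) - exp (-(y * u))) =
      (1 - exp (-(y * u))) * u ^ (-1 - s) - (1 - exp (-(x * u))) * u ^ (-1 - s) :=
    fun u => by ring
  simp_rw [h]
  rw [integral_sub (integrableOn_one_sub_exp_neg_mul_mul_rpow hs0 hs1 hy)
    (integrableOn_one_sub_exp_neg_mul_mul_rpow hs0 hs1 hx),
    integral_one_sub_exp_neg_mul_mul_rpow hs0 hy, integral_one_sub_exp_neg_mul_mul_rpow hs0 hx]
  ring

theorem isNonnegCosSeries_rpow_sub {s : ℝ} (hs0 : 0 < s) (hs1 : s < 1) :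
    IsNonnegCosSeries fun θ => 4 ^ s - (4 * sin (θ / 2) ^ 2) ^ s := by
  have hK := integral_one_sub_exp_neg_mul_rpow_pos hs0 hs1
  have h := isNonnegCosSeries_integral (μ := volume.restrict (Ioi 0))
    (F := fun u θ => u ^ (-1 - s) * (exp (-(4 * sin (θ / 2) ^ 2 * u)) - exp (-(4 * u))))
    (ae_restrict_of_forall_mem measurableSet_Ioi fun u hu =>
      (isNonnegCosSeries_exp_neg_mul_sub_exp (le_of_lt hu)).const_mul (rpow_nonneg (le_of_lt hu) _))
    (by fun_prop)
    ((integrableOn_one_sub_exp_neg_mul_mul_rpow hs0 hs1 (x := 4) (by norm_num)).congr_fun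
      (fun u _ => by simp [mul_comm]) measurableSet_Ioi)
  convert h.const_mul (inv_nonneg.mpr hK.le) using 2 with θ
  rw [integral_rpow_mul_exp_sub_exp hs0 hs1 (by positivity) (by norm_num)]
  field_simp

/-- The family `L^s_n(t)`, `n ∈ ℤ`, is summable with total mass `1`. -/
theorem Lker_sum_one (s t : ℝ) (hs0 : 0 < s) (hs1 : s < 1) (ht : 0 ≤ t) :
    (Summable fun n : ℤ => Lker s n t) ∧ (∑' n : ℤ, Lker s n t) = 1 := by
  have hF : IsNonnegCosSeries fun θ => exp (-t * (4 * sin (θ / 2) ^ 2) ^ s) := by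
    convert (((isNonnegCosSeries_rpow_sub hs0 hs1).const_mul ht).exp).const_mul
      (exp_pos (-(t * 4 ^ s))).le using 2 with θ
    rw [← exp_add]
    ring_nf
  have hF0 : exp (-t * (4 * sin (0 / 2) ^ 2) ^ s) = 1 := by simp [zero_rpow hs0.ne']
  -- `Lker s n t` unfolds to `cosCoeff (fun θ => exp (-t * (4 * sin (θ / 2) ^ 2) ^ s)) n`.
  exact ⟨hF.hasSum_cosCoeff.summable, hF.hasSum_cosCoeff.tsum_eq.trans hF0⟩
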